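/- Let λ : ℝⁿ → (0,∞) be a continuous weight function satisfying the sub-additive condition (SA), condition (SH) (λ(tξ) ≤ C λ(ξ) for |t| ≤ 1), and the polynomial growth condition (PG): (1/C)(1+|ξ|)^ν ≤ λ(ξ) ≤ C(1+|ξ|)^μ for constants C ≥ 1 and 0 < ν ≤ μ. Let c > 0 be fixed. Then for every ε > 0 there exists 0 < ε′ < ε such that for every set X ⊂ ℝⁿ one has (X ∩ {ξ : λ(ξ) > c/ε′})_{ε′λ} ⊂ X_{[ελ]} ∩ {ξ : λ(ξ) > c/ε}. -/

import Mathlib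

open MeasureTheory
open scoped ENNReal

/-- The temperance condition (T). -/
def IsTemperate {n : ℕ} (ω : EuclideanSpace ℝ (Fin n) → ℝ) : Prop :=
  ∃ C N : ℝ, 0 < C ∧ 0 < N ∧ ∀ ξ η, ω ξ ≤ C * (1 + ‖ξ - η‖) ^ N * ω η

/-- The sub-additive condition (SA). -/
def IsSubAdditiveWeight {n : ℕ} (ω : EuclideanSpace ℝ (Fin n) → ℝ) : Prop :=
  ∃ C : ℝ, 0 < C ∧ ∀ ξ η, ω ξ ≤ C * (ω (ξ - η) + ω η)

/-- Condition (SH): `ω(tξ) ≤ C ω(ξ)` for all `ξ` and `|t| ≤ 1`. -/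
def SatisfiesSH {n : ℕ} (ω : EuclideanSpace ℝ (Fin n) → ℝ) : Prop :=
  ∃ C : ℝ, 0 < C ∧ ∀ (ξ : EuclideanSpace ℝ (Fin n)) (t : ℝ), |t| ≤ 1 → ω (t • ξ) ≤ C * ω ξ

/-- The `[λ]`-neighborhood of size `ε` of a set `X ⊆ ℝⁿ`:
`X_{[ελ]} = ⋃_{ξ₀ ∈ X} {ξ : λ(ξ - ξ₀) < ε λ(ξ₀)}`. -/
def brNbhd {n : ℕ} (lam : EuclideanSpace ℝ (Fin n) → ℝ) (ε : ℝ)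
    (X : Set (EuclideanSpace ℝ (Fin n))) : Set (EuclideanSpace ℝ (Fin n)) :=
  ⋃ ξ₀ ∈ X, {ξ | lam (ξ - ξ₀) < ε * lam ξ₀}

/-- The `λ`-neighborhood of size `ε` of a set `X ⊆ ℝⁿ`:
`X_{ελ} = ⋃_{ξ₀ ∈ X} {ξ : |ξ - ξ₀| < ε λ(ξ₀)^(1/μ)}`. -/
def eucNbhd {n : ℕ} (lam : EuclideanSpace ℝ (Fin n) → ℝ) (μ ε : ℝ)
    (X : Set (EuclideanSpace ℝ (Fin n))) : Set (EuclideanSpace ℝ (Fin n)) :=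
  ⋃ ξ₀ ∈ X, {ξ | ‖ξ - ξ₀‖ < ε * lam ξ₀ ^ μ⁻¹}

/-! By the upper bound in (PG), `λ(η) ≲ 1 + ε'^μ λ(ξ₀)` whenever `|η| < ε' λ(ξ₀)^{1/μ}`;
when `ε'` is small and `λ(ξ₀) > c/ε'` is large, this is at most `δ λ(ξ₀)` for any prescribed `δ`.
Applied to `η = ξ - ξ₀` it puts `ξ` in `X_{[ελ]}`; applied to `η = ξ₀ - ξ` and combined with (SA)
it gives `λ(ξ₀) < 2 C λ(ξ)`, so `λ(ξ)` stays above `c/ε`. -/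

theorem Real.add_rpow_le_two_rpow_mul_rpow_add_rpow {a b p : ℝ} (ha : 0 ≤ a) (hb : 0 ≤ b)
    (hp : 0 ≤ p) : (a + b) ^ p ≤ 2 ^ p * (a ^ p + b ^ p) := calc
  (a + b) ^ p ≤ (2 * max a b) ^ p := by
    rw [two_mul]; gcongr <;> simp
  _ = 2 ^ p * max a b ^ p := Real.mul_rpow zero_le_two (le_max_of_le_left ha)
  _ = 2 ^ p * max (a ^ p) (b ^ p) := by rw [Real.rpow_max ha hb hp]
  _ ≤ 2 ^ p * (a ^ p + b ^ p) := by
    gcongr; exact max_le_add_of_nonneg (by positivity) (by positivity)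

theorem exists_lt_mul_of_norm_lt_mul_rpow_inv {E : Type*} [SeminormedAddCommGroup E]
    {lam : E → ℝ} {C₀ μ δ : ℝ} (hC₀ : 0 < C₀) (hμ : 0 < μ) (hδ : 0 < δ)
    (hgrowth : ∀ η, lam η ≤ C₀ * (1 + ‖η‖) ^ μ) :
    ∃ κ > 0, ∃ L₀ > 0, ∀ L, L₀ ≤ L → ∀ η, ‖η‖ < κ * L ^ μ⁻¹ → lam η < δ * L := by
  set A := C₀ * 2 ^ μ
  have hA : 0 < A := by positivity
  refine ⟨(δ / (2 * A)) ^ μ⁻¹, by positivity, 2 * A / δ, by positivity, fun L hL η hη => ?_⟩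
  have hL0 : 0 < L := lt_of_lt_of_le (by positivity) hL
  have hAL : A ≤ δ * L / 2 := by
    rw [div_le_iff₀ hδ] at hL; linarith
  have hpow : ((δ / (2 * A)) ^ μ⁻¹ * L ^ μ⁻¹) ^ μ = δ / (2 * A) * L := by
    rw [Real.mul_rpow (by positivity) (by positivity), Real.rpow_inv_rpow (by positivity) hμ.ne',
      Real.rpow_inv_rpow hL0.le hμ.ne']
  calc lam η ≤ C₀ * (1 + ‖η‖) ^ μ := hgrowth η
    _ < C₀ * (1 + (δ / (2 * A)) ^ μ⁻¹ * L ^ μ⁻¹) ^ μ := by gcongr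
    _ ≤ C₀ * (2 ^ μ * (1 ^ μ + ((δ / (2 * A)) ^ μ⁻¹ * L ^ μ⁻¹) ^ μ)) := by
      gcongr
      exact Real.add_rpow_le_two_rpow_mul_rpow_add_rpow zero_le_one (by positivity) hμ.le
    _ = A + δ * L / 2 := by
      rw [hpow, Real.one_rpow]; field_simp; ring
    _ ≤ δ * L := by linarith

theorem lt_two_mul_mul_of_lt_div_two_mul {E : Type*} [AddGroup E] {lam : E → ℝ} {Cs : ℝ}
    (hCs : 0 < Cs) (hSA : ∀ ξ η, lam ξ ≤ Cs * (lam (ξ - η) + lam η)) {ξ₀ ξ : E}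
    (hsmall : lam (ξ₀ - ξ) < lam ξ₀ / (2 * Cs)) : lam ξ₀ < 2 * Cs * lam ξ := by
  have := hSA ξ₀ ξ
  rw [lt_div_iff₀ (by positivity)] at hsmall
  nlinarith

theorem eucNbhd_subset_brNbhd_general {n : ℕ}
    (lam : EuclideanSpace ℝ (Fin n) → ℝ) (C₀ ν μ : ℝ)
    (hSA : IsSubAdditiveWeight lam)
    (hC₀ : 1 ≤ C₀) (hν : 0 < ν) (hνμ : ν ≤ μ)
    (hPG : ∀ ξ, C₀⁻¹ * (1 + ‖ξ‖) ^ ν ≤ lam ξ ∧ lam ξ ≤ C₀ * (1 + ‖ξ‖) ^ μ)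
    (c : ℝ) (hc : 0 < c) :
    ∀ ε : ℝ, 0 < ε → ∃ ε' : ℝ, 0 < ε' ∧ ε' < ε ∧
      ∀ X : Set (EuclideanSpace ℝ (Fin n)),
        eucNbhd lam μ ε' (X ∩ {ξ | c / ε' < lam ξ}) ⊆
          brNbhd lam ε X ∩ {ξ | c / ε < lam ξ} := by
  obtain ⟨Cs, hCs, hSA⟩ := hSA
  intro ε hε
  obtain ⟨κ, hκ, L₀, hL₀, hsmall⟩ := exists_lt_mul_of_norm_lt_mul_rpow_inv (δ := min ε (2 * Cs)⁻¹)
    (zero_lt_one.trans_le hC₀) (hν.trans_le hνμ) (by positivity) fun η => (hPG η).2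
  set ε' := min (ε / (2 * max Cs 1)) (min κ (c / L₀))
  have hε' : 0 < ε' := by positivity
  have hε'ε : ε' ≤ ε / (2 * max Cs 1) := min_le_left _ _
  refine ⟨ε', hε', hε'ε.trans_lt ?_, fun X ξ hξ => ?_⟩
  · exact div_lt_self hε (by linarith [le_max_right Cs 1])
  simp only [eucNbhd, Set.mem_iUnion, Set.mem_inter_iff, Set.mem_ofPred_eq] at hξ
  obtain ⟨ξ₀, ⟨hξ₀X, hξ₀c⟩, hdist⟩ := hξ
  have hL : L₀ ≤ lam ξ₀ := calc
    L₀ = c / (c / L₀) := (div_div_cancel₀ hc.ne').symm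
    _ ≤ c / ε' := div_le_div_of_nonneg_left hc.le hε' (min_le_right _ _ |>.trans (min_le_right _ _))
    _ ≤ lam ξ₀ := hξ₀c.le
  have hlam₀ : 0 ≤ lam ξ₀ := hL₀.le.trans hL
  have hnear : ‖ξ - ξ₀‖ < κ * lam ξ₀ ^ μ⁻¹ :=
    hdist.trans_le (by gcongr; exact (min_le_right _ _).trans (min_le_left _ _))
  have hfwd := hsmall _ hL _ hnear
  have hbwd := hsmall _ hL (ξ₀ - ξ) (by rwa [norm_sub_rev])
  refine ⟨Set.mem_biUnion hξ₀X (hfwd.trans_le (by gcongr; exact min_le_left _ _)), ?_⟩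
  have hξ₀ξ : lam ξ₀ < 2 * Cs * lam ξ := lt_two_mul_mul_of_lt_div_two_mul hCs hSA <| by
    rw [div_eq_inv_mul]
    exact hbwd.trans_le (by gcongr; exact min_le_right _ _)
  have hcξ₀ : 2 * Cs * (c / ε) < lam ξ₀ := calc
    2 * Cs * (c / ε) ≤ c / (ε / (2 * max Cs 1)) := by
      rw [div_div_eq_mul_div, mul_comm c, mul_div_assoc]
      gcongr
      exact le_max_left _ _
    _ ≤ c / ε' := div_le_div_of_nonneg_left hc.le hε' hε'ε
    _ < lam ξ₀ := hξ₀c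
  exact lt_of_mul_lt_mul_left (hcξ₀.trans hξ₀ξ) (by positivity)

/-- Let `λ` be a continuous, positive weight satisfying (SA), (SH) and the polynomial
growth condition (PG) with constants `C₀ ≥ 1`, `0 < ν ≤ μ`, and let `c > 0` be fixed.
Then for every `ε > 0` there is `0 < ε' < ε` such that for every `X ⊆ ℝⁿ`:
`(X ∩ {λ > c/ε'})_{ε'λ} ⊆ X_{[ελ]} ∩ {λ > c/ε}`. -/
theorem eucNbhd_subset_brNbhd {n : ℕ}
    (lam : EuclideanSpace ℝ (Fin n) → ℝ) (C₀ ν μ : ℝ)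
    (hlam_pos : ∀ ξ, 0 < lam ξ) (hlam_cont : Continuous lam)
    (hlam_temp : IsTemperate lam)
    (hSA : IsSubAdditiveWeight lam) (hSH : SatisfiesSH lam)
    (hC₀ : 1 ≤ C₀) (hν : 0 < ν) (hνμ : ν ≤ μ)
    (hPG : ∀ ξ, C₀⁻¹ * (1 + ‖ξ‖) ^ ν ≤ lam ξ ∧ lam ξ ≤ C₀ * (1 + ‖ξ‖) ^ μ)
    (c : ℝ) (hc : 0 < c) :
    ∀ ε : ℝ, 0 < ε → ∃ ε' : ℝ, 0 < ε' ∧ ε' < ε ∧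
      ∀ X : Set (EuclideanSpace ℝ (Fin n)),
        eucNbhd lam μ ε' (X ∩ {ξ | c / ε' < lam ξ}) ⊆
          brNbhd lam ε X ∩ {ξ | c / ε < lam ξ} :=
  eucNbhd_subset_brNbhd_general lam C₀ ν μ hSA hC₀ hν hνμ hPG c hc
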